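/- arXiv:1801.04550 — 3 statements merged into one kernel-verified Lean document; each statement's English description precedes it below -/
import Mathlib

section
/- For each i, the Demazure–Lusztig operators satisfy θ̃_i ∘ π̃_i = t · id and π̃_i ∘ θ̃_i = t · id as operators on the polynomial ring. -/
open MvPolynomial

/-- θ̃ᵢ ∘ π̃ᵢ = t·id and π̃ᵢ ∘ θ̃ᵢ = t·id on ℂ(t)[x₁,…,xₙ]. -/
theorem tildeTheta_comp_tildePi {n : ℕ} (i j : Fin n) (hij : (i : ℕ) + 1 = (j : ℕ))
    (s : MvPolynomial (Fin n) (RatFunc ℂ) →ₐ[RatFunc ℂ] MvPolynomial (Fin n) (RatFunc ℂ))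
    (hs : s = rename (Equiv.swap i j))
    (d : MvPolynomial (Fin n) (RatFunc ℂ) → MvPolynomial (Fin n) (RatFunc ℂ))
    (hd : ∀ f, (X i - X j) * d f = f - s f)
    (pi th tpi tth : MvPolynomial (Fin n) (RatFunc ℂ) → MvPolynomial (Fin n) (RatFunc ℂ))
    (hpi : ∀ f, pi f = d (X i * f))
    (hth : ∀ f, th f = pi f - f)
    (htpi : ∀ f, tpi f = (1 - C RatFunc.X) * pi f + C RatFunc.X * s f)
    (htth : ∀ f, tth f = (1 - C RatFunc.X) * th f + C RatFunc.X * s f) :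
    (∀ f, tth (tpi f) = C RatFunc.X * f) ∧ (∀ f, tpi (tth f) = C RatFunc.X * f) := by
  have hij' : i ≠ j := by
    intro h
    rw [h] at hij
    omega
  have hXne : (X i : MvPolynomial (Fin n) (RatFunc ℂ)) - X j ≠ 0 := by
    rw [sub_ne_zero]
    exact fun h => hij' (MvPolynomial.X_injective h)
  have cancel : ∀ a b : MvPolynomial (Fin n) (RatFunc ℂ),
      (X i - X j) * a = (X i - X j) * b → a = b := fun a b h => mul_left_cancel₀ hXne h
  have hsXi : s (X i) = X j := by
    rw [hs, rename_X, Equiv.swap_apply_left]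
  have hsXj : s (X j) = X i := by
    rw [hs, rename_X, Equiv.swap_apply_right]
  have hss : ∀ f, s (s f) = f := by
    intro f
    rw [hs, rename_rename]
    have hc : (Equiv.swap i j : Fin n → Fin n) ∘ (Equiv.swap i j) = id := by
      ext x; simp
    rw [hc, rename_id, AlgHom.id_apply]
  have hsC : s (C RatFunc.X) = C RatFunc.X := by rw [hs, rename_C]
  -- s fixes divided differences
  have hsd : ∀ f, s (d f) = d f := by
    intro f
    apply cancel
    have h1 := congrArg s (hd f)
    rw [map_mul, map_sub, map_sub, hsXi, hsXj, hss] at h1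
    have h2 := hd f
    linear_combination -h1 - h2
  -- θ f = X j * d f
  have hthd : ∀ f, th f = X j * d f := by
    intro f
    apply cancel
    rw [hth, hpi]
    have h1 := hd (X i * f)
    rw [map_mul, hsXi] at h1
    have h2 := hd f
    linear_combination h1 - X j * h2
  -- π f = f + X j * d f
  have hpid : ∀ f, pi f = f + X j * d f := by
    intro f
    have h := hthd f
    rw [hth] at h
    linear_combination h
  -- s (π f) = π f
  have hspi : ∀ f, s (pi f) = pi f := by
    intro f
    rw [hpid, map_add, map_mul, hsXj, hsd]
    apply cancel
    have h2 := hd f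
    linear_combination (X i - X j) * h2
  constructor
  · intro f
    have h1 : s (tpi f) = (1 - C RatFunc.X) * pi f + C RatFunc.X * f := by
      rw [htpi, map_add, map_mul, map_mul, hspi, hss, map_sub, map_one, hsC]
    have h4 := hd f
    have h2 : d (tpi f) = -(C RatFunc.X * d f) := by
      apply cancel
      have h3 := hd (tpi f)
      rw [h1] at h3
      linear_combination h3 + htpi f + C RatFunc.X * h4
    rw [htth, hthd, h2, h1, hpid]
    ring
  · intro f
    have h1 : s (tth f) = (1 - C RatFunc.X) * (X i * d f) + C RatFunc.X * f := by
      rw [htth, hthd, map_add, map_mul, map_mul, map_mul, hsXj, hsd, hss, map_sub,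
        map_one, hsC]
    have h4 := hd f
    have h2 : d (tth f) = -d f := by
      apply cancel
      have htt : tth f = (1 - C RatFunc.X) * (X j * d f) + C RatFunc.X * s f := by
        rw [htth, hthd]
      have h3 := hd (tth f)
      rw [h1] at h3
      linear_combination h3 + htt + C RatFunc.X * h4
    rw [htpi, hpid (tth f), h2, h1, htth, hthd]
    linear_combination (1 - C RatFunc.X) * C RatFunc.X * h4
end

section
/- Let D be a column diagram consisting of m boxes in rows each of length 2, where the first column is filled with m distinct positive integers (the left entries), and let S be a set of m positive integers. Then there is exactly one way to fill the second column with the elements of S (each used once) such that for every pair of rows r < r' the type-A triple condition is satisfied, i.e., the resulting filling has no coinversions. Concretely: a filling assigns to each row i a value F(i) ∈ S bijectively, and a coinversion is a pair of rows i < j such that NOT (the entries a = left entry of row i, b = F(i), c = F(j), ordered with ties broken by position, form a counter-clockwise orientation); equivalently, the triple (a,b,c) with a immediately left of b and c below b is a coinversion unless exactly: (c < b ≤ a) or (b ≤ a < c) or (a < c < b). The claim is that there is a unique bijection F : rows → S avoiding all coinversions. -/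
/-!
With `a = L 0`, the value of the top row is forced: it must be the first element of `S` met
when descending cyclically from `a`, i.e. the largest element of `S` that is `≤ a`, or the
maximum of `S` if there is none. Indeed the inversion condition `IsInversionTriple a b c` says
exactly that `b` comes before `c` in this cyclic order, and it is asymmetric in `b, c`. Removing
the top row and its value leaves the same problem with `m - 1` rows.
-/

open Function Set

theorem Set.bijOn_univ_iff {α β : Type*} {f : β → α} {t : Set α} :
    BijOn f univ t ↔ Injective f ∧ range f = t :=
  ⟨fun h => ⟨injOn_univ.mp h.injOn, image_univ ▸ h.image_eq⟩,
    fun ⟨hf, hr⟩ => hr ▸ image_univ ▸ hf.injOn.bijOn_image⟩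

namespace Fin

theorem bijOn_univ_cons_iff {α : Type*} {m : ℕ} {b : α} {G : Fin m → α} {t : Set α} :
    BijOn (cons b G : Fin (m + 1) → α) univ t ↔ b ∈ t ∧ BijOn G univ (t \ {b}) := by
  rw [bijOn_univ_iff, bijOn_univ_iff, cons_injective_iff, range_cons]
  constructor
  · rintro ⟨⟨hb, hG⟩, rfl⟩
    exact ⟨mem_insert _ _, hG, (insert_sdiff_self_of_notMem hb).symm⟩
  · rintro ⟨hb, hG, hr⟩
    refine ⟨⟨fun hbG => ?_, hG⟩, hr ▸ insert_sdiff_self_of_mem hb⟩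
    exact (hr ▸ hbG : b ∈ t \ {b}).2 rfl

theorem forall_lt_fin_succ_iff {m : ℕ} {P : Fin (m + 1) → Fin (m + 1) → Prop} :
    (∀ i j, i < j → P i j) ↔
      (∀ j : Fin m, P 0 j.succ) ∧ ∀ i j : Fin m, i < j → P i.succ j.succ := by
  simp [forall_fin_succ, succ_pos]

end Fin

section LinearOrder

variable {α : Type*} [LinearOrder α]

/-- The type-A inversion condition for the triple `a = L i`, `b = F i`, `c = F j`, `i < j`. -/
def IsInversionTriple (a b c : α) : Prop :=
  (c < b ∧ b ≤ a) ∨ (b ≤ a ∧ a < c) ∨ (a < c ∧ c < b)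

theorem IsInversionTriple.not_swap {a b c : α} (h : IsInversionTriple a b c) :
    ¬ IsInversionTriple a c b := by
  unfold IsInversionTriple at *
  rcases h with h | h | h <;> rintro (h' | h' | h') <;> order

theorem existsUnique_forall_isInversionTriple (a : α) {T : Finset α} (hT : T.Nonempty) :
    ∃! b, b ∈ T ∧ ∀ c ∈ T.erase b, IsInversionTriple a b c := by
  refine existsUnique_of_exists_of_unique ?_ fun b b' ⟨hb, hbT⟩ ⟨hb', hb'T⟩ => ?_
  · by_cases hlow : (T.filter (· ≤ a)).Nonempty
    · set b := (T.filter (· ≤ a)).max' hlow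
      have hb : b ∈ T ∧ b ≤ a := Finset.mem_filter.mp (Finset.max'_mem _ hlow)
      refine ⟨b, hb.1, fun c hc => ?_⟩
      obtain ⟨hcb, hcT⟩ := Finset.mem_erase.mp hc
      rcases le_or_gt c a with hca | hac
      · have hcb' : c ≤ b := Finset.le_max' _ c (Finset.mem_filter.mpr ⟨hcT, hca⟩)
        exact Or.inl ⟨lt_of_le_of_ne hcb' hcb, hb.2⟩
      · exact Or.inr (Or.inl ⟨hb.2, hac⟩)
    · refine ⟨T.max' hT, T.max'_mem hT, fun c hc => ?_⟩
      obtain ⟨hcb, hcT⟩ := Finset.mem_erase.mp hc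
      have hac : a < c := not_le.mp fun hca => hlow ⟨c, Finset.mem_filter.mpr ⟨hcT, hca⟩⟩
      exact Or.inr (Or.inr ⟨hac, lt_of_le_of_ne (T.le_max' c hcT) hcb⟩)
  · by_contra hne
    exact (hbT b' (Finset.mem_erase.mpr ⟨Ne.symm hne, hb'⟩)).not_swap
      (hb'T b (Finset.mem_erase.mpr ⟨hne, hb⟩))

def IsCoinversionFree {m : ℕ} (L : Fin m → α) (S : Finset α) (F : Fin m → α) : Prop :=
  BijOn F univ S ∧ ∀ i j, i < j → IsInversionTriple (L i) (F i) (F j)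

theorem isCoinversionFree_cons_iff {m : ℕ} {L : Fin (m + 1) → α} {S : Finset α} {b : α}
    {G : Fin m → α} :
    IsCoinversionFree L S (Fin.cons b G) ↔
      (b ∈ S ∧ ∀ c ∈ S.erase b, IsInversionTriple (L 0) b c) ∧
        IsCoinversionFree (Fin.tail L) (S.erase b) G := by
  unfold IsCoinversionFree
  rw [Fin.bijOn_univ_cons_iff, Fin.forall_lt_fin_succ_iff, ← Finset.coe_erase]
  constructor
  · rintro ⟨⟨hb, hG⟩, hhead, htail⟩
    refine ⟨⟨hb, fun c hc => ?_⟩, hG, htail⟩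
    obtain ⟨j, -, rfl⟩ := hG.surjOn hc
    simpa using hhead j
  · rintro ⟨⟨hb, hhead⟩, hG, htail⟩
    exact ⟨⟨hb, hG⟩, fun j => by simpa using hhead _ (hG.mapsTo (mem_univ j)), htail⟩

theorem existsUnique_isCoinversionFree :
    ∀ {m : ℕ} (L : Fin m → α) (S : Finset α), S.card = m → ∃! F, IsCoinversionFree L S F
  | 0, L, S, hS => by
    obtain rfl : S = ∅ := Finset.card_eq_zero.mp hS
    refine ⟨Fin.elim0, ⟨?_, fun i => i.elim0⟩, fun F _ => funext fun i => i.elim0⟩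
    simpa using Fin.isEmpty'
  | m + 1, L, S, hS => by
    have hSne : S.Nonempty := Finset.card_pos.mp (by omega)
    obtain ⟨b, hb, hb_unique⟩ := existsUnique_forall_isInversionTriple (L 0) hSne
    obtain ⟨G, hG, hG_unique⟩ := existsUnique_isCoinversionFree (Fin.tail L) (S.erase b)
      (by rw [Finset.card_erase_of_mem hb.1, hS, Nat.add_sub_cancel])
    refine ⟨Fin.cons b G, isCoinversionFree_cons_iff.mpr ⟨hb, hG⟩, fun F hF => ?_⟩
    rw [← Fin.cons_self_tail F, isCoinversionFree_cons_iff] at hF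
    obtain rfl := hb_unique _ hF.1
    rw [← hG_unique _ hF.2, Fin.cons_self_tail]

end LinearOrder

theorem unique_coinversion_free_column_general (m : ℕ) (L : Fin m → ℕ)
    (S : Finset ℕ) (hScard : S.card = m) :
    ∃! F : Fin m → ℕ,
      Set.BijOn F Set.univ (S : Set ℕ) ∧
      ∀ i j : Fin m, i < j →
        ((F j < F i ∧ F i ≤ L i) ∨ (F i ≤ L i ∧ L i < F j) ∨ (L i < F j ∧ F j < F i)) :=
  existsUnique_isCoinversionFree L S hScard

/-- unique coinversion-free filling of the second column.
Rows are indexed by `Fin m` (top to bottom), `L` gives the distinct positive left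
entries, `S` is a set of `m` positive integers.  For rows `i < j` with
`a = L i`, `b = F i`, `c = F j`, the type-A inversion condition is
`(c < b ∧ b ≤ a) ∨ (b ≤ a ∧ a < c) ∨ (a < c ∧ c < b)`.  There is a unique
bijection `F` from the rows onto `S` all of whose triples are inversions. -/
theorem unique_coinversion_free_column (m : ℕ) (L : Fin m → ℕ)
    (hLpos : ∀ i, 0 < L i) (hLinj : Function.Injective L)
    (S : Finset ℕ) (hScard : S.card = m) (hSpos : ∀ x ∈ S, 0 < x) :
    ∃! F : Fin m → ℕ,
      Set.BijOn F Set.univ (S : Set ℕ) ∧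
      ∀ i j : Fin m, i < j →
        ((F j < F i ∧ F i ≤ L i) ∨ (F i ≤ L i ∧ L i < F j) ∨ (L i < F j ∧ F j < F i)) :=
  unique_coinversion_free_column_general m L S hScard
end

section
/- Adding one box to every row shifts out a full monomial: for any composition λ ∈ ℕ^n and basement σ, E^σ_{(λ_1+1,…,λ_n+1)}(x; q, t) = (x_1 ⋯ x_n) · E^σ_{(λ_1,…,λ_n)}(x; q, t). -/
open MvPolynomial Finset
open scoped Classical

noncomputable section

variable {n : ℕ}

/-- The augmented filling determined by a filling `G` of the non-basement boxes of
the diagram of shape `lam` with basement `σ`: the entry in row `r`, column `c`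
(non-basement columns are `1,…,lam r`; column `0` is the basement, whose entry in
row `r` is `σ r`). -/
def augFill (lam : Fin n → ℕ) (σ : Equiv.Perm (Fin n))
    (G : (r : Fin n) → Fin (lam r) → Fin n) (r : Fin n) (c : ℕ) : Fin n :=
  if h : 1 ≤ c ∧ c ≤ lam r then G r ⟨c - 1, by omega⟩ else σ r

/-- Non-attacking: no two equal entries in the same column (basement included via
distinctness of `σ`), and no two equal entries in adjacent columns where the
rightmost of the two boxes lies in a row strictly below the other. -/
def NonAttacking (lam : Fin n → ℕ) (F : Fin n → ℕ → Fin n) : Prop :=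
  (∀ r r' c, r ≠ r' → 1 ≤ c → c ≤ lam r → c ≤ lam r' → F r c ≠ F r' c) ∧
  (∀ r r' c, r < r' → (c = 0 ∨ c ≤ lam r) → c + 1 ≤ lam r' → F r c ≠ F r' (c + 1))

/-- The arm of the box in row `r`, column `c` of the augmented diagram of shape `lam`. -/
def armOf (lam : Fin n → ℕ) (r : Fin n) (c : ℕ) : ℕ :=
  (Finset.univ.filter (fun r' => r < r' ∧ lam r' ≤ lam r ∧ c ≤ lam r')).card +
  (Finset.univ.filter (fun r' => r' < r ∧ lam r' < lam r ∧ c - 1 ≤ lam r')).card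

/-- The leg of the box in row `r`, column `c`: the number of boxes to its right. -/
def legOf (lam : Fin n → ℕ) (r : Fin n) (c : ℕ) : ℕ := lam r - c

/-- The major index: the sum of `leg + 1` over all descents, where a descent is a
non-basement box whose entry is strictly larger than the entry directly to its left. -/
def majF (lam : Fin n → ℕ) (F : Fin n → ℕ → Fin n) : ℕ :=
  ∑ r : Fin n, ∑ c ∈ Finset.Icc 1 (lam r),
    if F r (c - 1) < F r c then legOf lam r c + 1 else 0

/-- The inversion-triple condition on the three values `a` (left), `b` (right),
`cc` (the third box), with ties broken as `b₁ < c₂ < a₃`. -/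
def InvTriple (a b cc : Fin n) : Prop :=
  (cc < b ∧ b ≤ a) ∨ (b ≤ a ∧ a < cc) ∨ (a < cc ∧ cc < b)

/-- The number of coinversions: type A and type B triples that are not inversion triples. -/
def coinvF (lam : Fin n → ℕ) (F : Fin n → ℕ → Fin n) : ℕ :=
  (∑ r : Fin n, ∑ r' : Fin n, ((Finset.Icc 1 (lam r')).filter (fun c =>
      r < r' ∧ lam r' ≤ lam r ∧ ¬ InvTriple (F r (c - 1)) (F r c) (F r' c))).card) +
  (∑ r : Fin n, ∑ r' : Fin n, ((Finset.Icc 1 (lam r)).filter (fun c =>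
      r' < r ∧ lam r' < lam r ∧ c - 1 ≤ lam r' ∧
        ¬ InvTriple (F r (c - 1)) (F r c) (F r' (c - 1)))).card)

variable (K : Type) [Field K]

/-- The weight monomial `x^F` of a filling. -/
def fweight (lam : Fin n → ℕ) (F : Fin n → ℕ → Fin n) : MvPolynomial (Fin n) K :=
  ∏ r : Fin n, ∏ c ∈ Finset.Icc 1 (lam r), X (F r c)

/-- The product `∏_{u : F(d(u)) ≠ F(u)} (1−t)/(1−q^{1+leg u} t^{1+arm u})` over
non-basement boxes whose entry differs from the entry directly to the left. -/
def denomProd (lam : Fin n → ℕ) (q t : K) (F : Fin n → ℕ → Fin n) : K :=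
  ∏ r : Fin n, ∏ c ∈ Finset.Icc 1 (lam r),
    if F r (c - 1) ≠ F r c then
      (1 - t) / (1 - q ^ (1 + legOf lam r c) * t ^ (1 + armOf lam r c)) else 1

/-- The permuted-basement non-symmetric Macdonald polynomial `E^σ_λ(x; q, t)`,
via the Haglund–Haiman–Loehr-type combinatorial formula over non-attacking fillings. -/
def macE (lam : Fin n → ℕ) (σ : Equiv.Perm (Fin n)) (q t : K) : MvPolynomial (Fin n) K :=
  ∑ G : ((r : Fin n) → Fin (lam r) → Fin n),
    if NonAttacking lam (augFill lam σ G) then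
      C (q ^ majF lam (augFill lam σ G) * t ^ coinvF lam (augFill lam σ G) *
          denomProd K lam q t (augFill lam σ G)) *
        fweight K lam (augFill lam σ G)
    else 0

/-!
In a non-attacking filling of shape `λ + 1` the first column must repeat the basement: its
entries are distinct, and row `r` cannot hold `σ s` with `s < r` without attacking the basement
box of row `s`, so `r ↦ σ⁻¹ (F r 1)` is an injection of `Fin n` that never decreases, i.e. the
identity. Deleting that column is therefore a bijection onto the fillings of shape `λ`, and it
preserves everything but the weight: the deleted boxes are no descents, lie in no
coinversion triple and carry no denominator factor, the legs and arms of the other boxes do not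
change, and the weight loses exactly `x_{σ 1} ⋯ x_{σ n} = x_1 ⋯ x_n`.
-/

lemma Finset.prod_Icc_one_add_one {M : Type*} [CommMonoid M] (m : ℕ) (f : ℕ → M) :
    ∏ c ∈ Icc 1 (m + 1), f c = f 1 * ∏ c ∈ Icc 1 m, f (c + 1) := by
  rw [← insert_Icc_add_one_left_eq_Icc (by omega), prod_insert (by simp), ← image_add_right_Icc,
    prod_image (by simp)]

lemma Finset.sum_Icc_one_add_one {M : Type*} [AddCommMonoid M] (m : ℕ) (f : ℕ → M) :
    ∑ c ∈ Icc 1 (m + 1), f c = f 1 + ∑ c ∈ Icc 1 m, f (c + 1) := by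
  rw [← insert_Icc_add_one_left_eq_Icc (by omega), sum_insert (by simp), ← image_add_right_Icc,
    sum_image (by simp)]

lemma invTriple_self_left {a cc : Fin n} (h : a ≠ cc) : InvTriple a a cc := by
  rcases h.lt_or_gt with h | h
  · exact Or.inr (Or.inl ⟨le_rfl, h⟩)
  · exact Or.inl ⟨h, le_rfl⟩

/-- Truncated subtraction makes `shiftCols F` repeat column `0` of `F` as its column `1`. -/
def shiftCols (F : Fin n → ℕ → Fin n) : Fin n → ℕ → Fin n := fun r c => F r (c - 1)

def macTerm (lam : Fin n → ℕ) (q t : K) (F : Fin n → ℕ → Fin n) :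
    MvPolynomial (Fin n) K :=
  if NonAttacking lam F then
    C (q ^ majF lam F * t ^ coinvF lam F * denomProd K lam q t F) * fweight K lam F
  else 0

lemma macE_eq_sum_macTerm (lam : Fin n → ℕ) (σ : Equiv.Perm (Fin n)) (q t : K) :
    macE K lam σ q t = ∑ G, macTerm K lam q t (augFill lam σ G) :=
  rfl

section shiftCols

variable (lam : Fin n → ℕ) (F : Fin n → ℕ → Fin n)

lemma majF_shiftCols : majF (fun i => lam i + 1) (shiftCols F) = majF lam F := by
  unfold majF legOf shiftCols
  refine sum_congr rfl fun r _ => ?_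
  simp [sum_Icc_one_add_one]

lemma armOf_add_one (r : Fin n) (c : ℕ) :
    armOf (fun i => lam i + 1) r (c + 1) = armOf lam r c := by
  unfold armOf
  congr 2 <;> ext r' <;> simp only [mem_filter, mem_univ, true_and] <;> omega

lemma denomProd_shiftCols (q t : K) :
    denomProd K (fun i => lam i + 1) q t (shiftCols F) = denomProd K lam q t F := by
  unfold denomProd legOf shiftCols
  refine prod_congr rfl fun r _ => ?_
  simp [prod_Icc_one_add_one, armOf_add_one]

lemma fweight_shiftCols :
    fweight K (fun i => lam i + 1) (shiftCols F) = (∏ r, X (F r 0)) * fweight K lam F := by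
  unfold fweight shiftCols
  simp [prod_Icc_one_add_one, prod_mul_distrib]

variable {F}

lemma coinvF_shiftCols (hF : Function.Injective (F · 0)) :
    coinvF (fun i => lam i + 1) (shiftCols F) = coinvF lam F := by
  unfold coinvF shiftCols
  congr 1 <;> refine sum_congr rfl fun r _ => sum_congr rfl fun r' _ => ?_ <;>
    simp only [card_filter, sum_Icc_one_add_one, Nat.sub_self, Nat.zero_sub, add_tsub_cancel_right,
      add_le_add_iff_right, add_lt_add_iff_right, Nat.sub_le_iff_le_add]
  · rw [if_neg fun h => h.2.2 (invTriple_self_left (hF.ne h.1.ne)), zero_add]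
  · rw [if_neg fun h => h.2.2.2 (invTriple_self_left (hF.ne h.1.ne')), zero_add]

lemma nonAttacking_shiftCols_iff (hF : Function.Injective (F · 0)) :
    NonAttacking (fun i => lam i + 1) (shiftCols F) ↔ NonAttacking lam F := by
  dsimp only [NonAttacking, shiftCols]
  constructor
  · rintro ⟨hcol, hdiag⟩
    refine ⟨fun r r' c hrr' h1 hr hr' => ?_, fun r r' c hrr' hr hr' => ?_⟩
    · simpa using hcol r r' (c + 1) hrr' (by omega) (by omega) (by omega)
    · simpa using hdiag r r' (c + 1) hrr' (by omega) (by omega)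
  · rintro ⟨hcol, hdiag⟩
    refine ⟨fun r r' c hrr' h1 hr hr' => ?_, fun r r' c hrr' hr hr' => ?_⟩
    · obtain _ | _ | c := c
      · omega
      · exact hF.ne hrr'
      · simpa using hcol r r' (c + 1) hrr' (by omega) (by omega) (by omega)
    · rcases c with _ | c
      · exact hF.ne hrr'.ne
      · simpa using hdiag r r' c hrr' (by omega) (by omega)

lemma macTerm_shiftCols (q t : K) (hF : Function.Injective (F · 0)) :
    macTerm K (fun i => lam i + 1) q t (shiftCols F) =
      (∏ r, X (F r 0)) * macTerm K lam q t F := by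
  unfold macTerm
  rw [nonAttacking_shiftCols_iff lam hF, majF_shiftCols, coinvF_shiftCols lam hF,
    denomProd_shiftCols, fweight_shiftCols]
  split_ifs <;> ring

end shiftCols

lemma Fin.eq_self_of_injective_of_le {f : Fin n → Fin n} (hf : Function.Injective f)
    (hle : ∀ i, i ≤ f i) (i : Fin n) : f i = i := by
  have hsum : ∑ j : Fin n, (j : ℕ) = ∑ j, (f j : ℕ) :=
    (Equiv.sum_comp (Equiv.ofBijective f hf.bijective_of_finite) (fun j => (j : ℕ))).symm
  exact Fin.ext ((sum_eq_sum_iff_of_le fun j _ => Fin.le_iff_val_le_val.1 (hle j)).1 hsum i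
    (mem_univ i)).symm

lemma NonAttacking.col_one_eq_basement {lam : Fin n → ℕ} {F : Fin n → ℕ → Fin n}
    (hNA : NonAttacking lam F) (hlam : ∀ r, 1 ≤ lam r) {σ : Equiv.Perm (Fin n)}
    (hσ : ∀ r, F r 0 = σ r) (r : Fin n) : F r 1 = σ r := by
  have hinj : Function.Injective fun r => σ.symm (F r 1) := by
    intro r r' h
    by_contra hrr'
    exact hNA.1 r r' 1 hrr' le_rfl (hlam r) (hlam r') (σ.symm.injective h)
  have hle : ∀ r, r ≤ σ.symm (F r 1) := by
    intro r
    by_contra! hlt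
    refine hNA.2 _ r 0 hlt (Or.inl rfl) (hlam r) ?_
    rw [hσ, Equiv.apply_symm_apply]
  simpa using congrArg σ (Fin.eq_self_of_injective_of_le hinj hle r)

lemma augFill_zero (lam : Fin n → ℕ) (σ : Equiv.Perm (Fin n))
    (G : (r : Fin n) → Fin (lam r) → Fin n) (r : Fin n) : augFill lam σ G r 0 = σ r :=
  dif_neg (by omega)

def consBasement {lam : Fin n → ℕ} (σ : Equiv.Perm (Fin n))
    (G : (r : Fin n) → Fin (lam r) → Fin n) : (r : Fin n) → Fin (lam r + 1) → Fin n :=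
  fun r => Fin.cons (σ r) (G r)

lemma consBasement_injective (lam : Fin n → ℕ) (σ : Equiv.Perm (Fin n)) :
    Function.Injective (consBasement (lam := lam) σ) := by
  intro G G' h
  funext r i
  simpa [consBasement] using congrFun (congrFun h r) i.succ

lemma augFill_consBasement (lam : Fin n → ℕ) (σ : Equiv.Perm (Fin n))
    (G : (r : Fin n) → Fin (lam r) → Fin n) :
    augFill (fun i => lam i + 1) σ (consBasement σ G) = shiftCols (augFill lam σ G) := by
  funext r c
  rcases c with _ | _ | c
  · simp [augFill, shiftCols]
  · simp [augFill, shiftCols, consBasement]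
  · simp only [augFill, shiftCols, consBasement, le_add_iff_nonneg_left, zero_le, true_and,
      add_le_add_iff_right, Order.add_one_le_iff, add_tsub_cancel_right]
    split_ifs with h
    exacts [Fin.cons_succ (α := fun _ => Fin n) (σ r) (G r) ⟨c, h⟩, rfl]

lemma mem_range_consBasement {lam : Fin n → ℕ} {σ : Equiv.Perm (Fin n)}
    {G' : (r : Fin n) → Fin (lam r + 1) → Fin n}
    (hNA : NonAttacking (fun i => lam i + 1) (augFill (fun i => lam i + 1) σ G')) :
    G' ∈ Set.range (consBasement σ) := by
  refine ⟨fun r i => G' r i.succ, funext fun r => ?_⟩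
  have h : G' r 0 = σ r := by
    simpa [augFill] using
      hNA.col_one_eq_basement (fun r => Nat.le_add_left 1 (lam r)) (augFill_zero _ σ G') r
  rw [consBasement, ← h]
  exact Fin.cons_self_tail (G' r)

theorem macE_add_row {n : ℕ} (lam : Fin n → ℕ) (σ : Equiv.Perm (Fin n)) (q t : K) :
    macE K (fun i => lam i + 1) σ q t = (∏ i : Fin n, X i) * macE K lam σ q t := by
  rw [macE_eq_sum_macTerm, macE_eq_sum_macTerm, mul_sum]
  symm
  refine sum_of_injOn (consBasement σ) (consBasement_injective lam σ).injOn
    (fun _ _ => by simp) (fun G' _ hG' => ?_) (fun G _ => ?_)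
  · exact if_neg fun hNA => hG' (by simpa using mem_range_consBasement hNA)
  · rw [augFill_consBasement,
      macTerm_shiftCols K lam q t (by simpa [augFill_zero] using σ.injective)]
    simp only [augFill_zero, Equiv.prod_comp σ (fun i => (X i : MvPolynomial (Fin n) K))]

end
end
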